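/- arXiv:math/0605243 — 2 statements merged into one kernel-verified Lean document; each statement's English description precedes it below -/
import Mathlib

section
/- If A and B are positive semi-definite operators on a finite-dimensional real inner product space, then A(A+B)⁺B = B(A+B)⁺A, and this operator is self-adjoint. -/
/-!
Let `S = A + B`. Since `A` and `B` are positive, `ker S ⊆ ker A`; together with `S G S = S` this
gives `A G S = A`. The Moore–Penrose inverse is unique, so that of the self-adjoint `S` is
self-adjoint, and taking adjoints gives `S G A = A` as well. Writing `B = S - A`, both `A G B` and
`B G A` then equal `A - A G A`, which is self-adjoint.
-/

/-- `G` is the Moore-Penrose pseudo-inverse of `L` (Penrose conditions;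
adjoint-symmetry of `L ∘ G` and `G ∘ L` expressed via `IsSymmetric`). -/
def IsMoorePenrose {V : Type*} [NormedAddCommGroup V] [InnerProductSpace ℝ V]
    (L G : V →ₗ[ℝ] V) : Prop :=
  L ∘ₗ (G ∘ₗ L) = L ∧ G ∘ₗ (L ∘ₗ G) = G ∧
  (L ∘ₗ G).IsSymmetric ∧ (G ∘ₗ L).IsSymmetric

/-- `IsMoorePenrose` is the case of operators, where `star` is the adjoint. -/
structure IsPenroseInverse {R : Type*} [Mul R] [Star R] (s g : R) : Prop where
  mul_inv_mul : s * g * s = s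
  inv_mul_inv : g * s * g = g
  isSelfAdjoint_mul_inv : IsSelfAdjoint (s * g)
  isSelfAdjoint_inv_mul : IsSelfAdjoint (g * s)

namespace IsPenroseInverse

section Semigroup

variable {R : Type*} [Semigroup R] [StarMul R] {s g g' : R}

protected theorem star (h : IsPenroseInverse s g) : IsPenroseInverse (star s) (star g) where
  mul_inv_mul := by rw [← star_mul, ← star_mul, ← mul_assoc, h.mul_inv_mul]
  inv_mul_inv := by rw [← star_mul, ← star_mul, ← mul_assoc, h.inv_mul_inv]
  isSelfAdjoint_mul_inv := by
    rw [← star_mul, IsSelfAdjoint.star_iff]; exact h.isSelfAdjoint_inv_mul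
  isSelfAdjoint_inv_mul := by
    rw [← star_mul, IsSelfAdjoint.star_iff]; exact h.isSelfAdjoint_mul_inv

theorem unique (h : IsPenroseInverse s g) (h' : IsPenroseInverse s g') : g = g' := by
  have hsg : star g * star s = s * g := by rw [← star_mul]; exact h.isSelfAdjoint_mul_inv
  have hsg' : star g' * star s = s * g' := by rw [← star_mul]; exact h'.isSelfAdjoint_mul_inv
  have hgs : star s * star g = g * s := by rw [← star_mul]; exact h.isSelfAdjoint_inv_mul
  have hgs' : star s * star g' = g' * s := by rw [← star_mul]; exact h'.isSelfAdjoint_inv_mul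
  have hs : star s * star g * star s = star s := by
    rw [← star_mul, ← star_mul, ← mul_assoc, h.mul_inv_mul]
  have hs' : star s * star g' * star s = star s := by
    rw [← star_mul, ← star_mul, ← mul_assoc, h'.mul_inv_mul]
  calc g = g * s * g := h.inv_mul_inv.symm
    _ = g * (star g * star s) := by rw [mul_assoc, hsg]
    _ = g * (star g * (star s * star g' * star s)) := by rw [hs']
    _ = g * (star g * star s) * (star g' * star s) := by simp only [mul_assoc]
    _ = g * s * g * s * g' := by rw [hsg, hsg']; simp only [mul_assoc]
    _ = g * s * (g' * s * g') := by rw [h.inv_mul_inv, h'.inv_mul_inv]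
    _ = star s * star g * (star s * star g') * g' := by rw [hgs, hgs']; simp only [mul_assoc]
    _ = star s * star g * star s * star g' * g' := by simp only [mul_assoc]
    _ = g' := by rw [hs, hgs', h'.inv_mul_inv]

theorem isSelfAdjoint (hs : IsSelfAdjoint s) (h : IsPenroseInverse s g) : IsSelfAdjoint g := by
  have h' := h.star
  rw [hs.star_eq] at h'
  exact (h.unique h').symm

end Semigroup

theorem mul_inv_mul_comm_of_add {R : Type*} [Ring R] [StarRing R] {a b g : R}
    (ha : IsSelfAdjoint a) (hb : IsSelfAdjoint b) (h : IsPenroseInverse (a + b) g)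
    (hag : a * (g * (a + b)) = a) :
    a * (g * b) = b * (g * a) ∧ IsSelfAdjoint (a * (g * b)) := by
  have hg : IsSelfAdjoint g := h.isSelfAdjoint (ha.add hb)
  have hga : (a + b) * (g * a) = a := by
    simpa [star_mul, ha.star_eq, hb.star_eq, hg.star_eq, mul_assoc] using congrArg star hag
  have hleft : a * (g * b) = a - a * (g * a) := by
    rw [eq_sub_iff_add_eq, ← mul_add, ← mul_add, add_comm b, hag]
  have hright : b * (g * a) = a - a * (g * a) := by
    rw [eq_sub_iff_add_eq, ← add_mul, add_comm b, hga]
  refine ⟨hleft.trans hright.symm, ?_⟩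
  rw [hleft, ← mul_assoc]
  exact ha.sub (hg.conjugate_self ha)

end IsPenroseInverse

namespace LinearMap

section IsPositive

open RCLike
open scoped InnerProductSpace

variable {𝕜 E : Type*} [RCLike 𝕜] [NormedAddCommGroup E] [InnerProductSpace 𝕜 E]

theorem IsPositive.apply_eq_zero_of_inner_eq_zero {T : E →ₗ[𝕜] E} (hT : T.IsPositive)
    {x : E} (hx : ⟪T x, x⟫_𝕜 = 0) : T x = 0 := by
  -- a nonnegative quadratic in `t` without constant term has vanishing linear coefficient
  have hquad : ∀ t : ℝ, 0 ≤ re ⟪T (T x), T x⟫_𝕜 * (t * t) + 2 * ‖T x‖ ^ 2 * t + 0 := by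
    intro t
    have h := hT.re_inner_nonneg_left (x + (t : 𝕜) • T x)
    have hsymm : ⟪T (T x), x⟫_𝕜 = ⟪T x, T x⟫_𝕜 := hT.isSymmetric (T x) x
    simp only [map_add, map_smul, inner_add_left, inner_add_right, inner_smul_left,
      inner_smul_right, hx, hsymm, conj_ofReal, re_ofReal_mul, inner_self_eq_norm_sq_to_K,
      ← ofReal_pow, ofReal_re, map_zero] at h
    linarith
  have hdisc := discrim_le_zero hquad
  rw [discrim, mul_zero, sub_zero] at hdisc
  have : ‖T x‖ ^ 2 = 0 := by nlinarith [sq_nonneg (‖T x‖ ^ 2)]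
  simpa using this

theorem IsPositive.ker_add_le_ker_left {T S : E →ₗ[𝕜] E} (hT : T.IsPositive) (hS : S.IsPositive) :
    ker (T + S) ≤ ker T := by
  intro x hx
  rw [mem_ker] at hx ⊢
  have hsum : re ⟪T x, x⟫_𝕜 + re ⟪S x, x⟫_𝕜 = 0 := by
    rw [← map_add, ← inner_add_left, ← add_apply, hx, inner_zero_left, map_zero]
  have hTx : re ⟪T x, x⟫_𝕜 = 0 :=
    le_antisymm (by linarith [hS.re_inner_nonneg_left x]) (hT.re_inner_nonneg_left x)
  refine hT.apply_eq_zero_of_inner_eq_zero ?_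
  rw [← hT.isSymmetric.coe_re_inner_apply_self x, hTx, ofReal_zero]

end IsPositive

theorem comp_eq_self_of_ker_le {R M N P : Type*} [Ring R] [AddCommGroup M] [AddCommGroup N]
    [AddCommGroup P] [Module R M] [Module R N] [Module R P] {S : M →ₗ[R] N} {T : M →ₗ[R] P}
    {Q : M →ₗ[R] M} (hker : ker S ≤ ker T) (hQ : S ∘ₗ Q = S) : T ∘ₗ Q = T := by
  ext x
  have hx : Q x - x ∈ ker S := by
    rw [mem_ker, map_sub, ← comp_apply, hQ, sub_self]
  simpa [sub_eq_zero] using hker hx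

end LinearMap

theorem IsMoorePenrose.isPenroseInverse {V : Type*} [NormedAddCommGroup V]
    [InnerProductSpace ℝ V] [FiniteDimensional ℝ V] {L G : V →ₗ[ℝ] V}
    (h : IsMoorePenrose L G) : IsPenroseInverse L G :=
  let ⟨h₁, h₂, h₃, h₄⟩ := h
  { mul_inv_mul := (mul_assoc L G L).trans h₁
    inv_mul_inv := (mul_assoc G L G).trans h₂
    isSelfAdjoint_mul_inv := (LinearMap.isSymmetric_iff_isSelfAdjoint _).1 h₃
    isSelfAdjoint_inv_mul := (LinearMap.isSymmetric_iff_isSelfAdjoint _).1 h₄ }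

theorem parallelSum_symm {V : Type*} [NormedAddCommGroup V] [InnerProductSpace ℝ V]
    [FiniteDimensional ℝ V] (A B : V →ₗ[ℝ] V)
    (hA : A.IsSymmetric) (hB : B.IsSymmetric)
    (hApsd : ∀ x : V, 0 ≤ (inner ℝ x (A x) : ℝ)) (hBpsd : ∀ x : V, 0 ≤ (inner ℝ x (B x) : ℝ))
    (G : V →ₗ[ℝ] V) (hG : IsMoorePenrose (A + B) G) :
    A ∘ₗ (G ∘ₗ B) = B ∘ₗ (G ∘ₗ A) ∧ (A ∘ₗ (G ∘ₗ B)).IsSymmetric := by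
  have hApos : A.IsPositive := ⟨hA, fun x => by simpa [real_inner_comm] using hApsd x⟩
  have hBpos : B.IsPositive := ⟨hB, fun x => by simpa [real_inner_comm] using hBpsd x⟩
  have hAGS : A ∘ₗ (G ∘ₗ (A + B)) = A :=
    LinearMap.comp_eq_self_of_ker_le (hApos.ker_add_le_ker_left hBpos) hG.1
  obtain ⟨hcomm, hsa⟩ :=
    hG.isPenroseInverse.mul_inv_mul_comm_of_add hApos.isSelfAdjoint hBpos.isSelfAdjoint hAGS
  exact ⟨hcomm, (LinearMap.isSymmetric_iff_isSelfAdjoint _).2 hsa⟩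
end

section
/- If A and B are positive semi-definite operators on a finite-dimensional real inner product space, then Range(A(A+B)⁺B) = Range(A) ∩ Range(B). -/
/-!
Write `S = A + B`. Positivity gives `ker S ≤ ker A ⊓ ker B`, so Penrose's first equation
`S G S = S` yields `A G S = A`; and since `S G` is the orthogonal projection onto
`range S ⊇ range B`, also `S G B = B`. These two identities alone give the range equality:
`A G B x = B (x - G B x)`, and if `y = A u = B v` then `A G B (u + v) = A G (S u) = y`.
-/

open RCLike
open scoped InnerProductSpace

namespace LinearMap

section Module

variable {R M N P : Type*} [Ring R] [AddCommGroup M] [Module R M] [AddCommGroup N] [Module R N]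
  [AddCommGroup P] [Module R P]

theorem comp_comp_eq_of_ker_le {L : M →ₗ[R] N} {G : N →ₗ[R] M} {T : M →ₗ[R] P}
    (hLGL : L ∘ₗ G ∘ₗ L = L) (hker : ker L ≤ ker T) : T ∘ₗ G ∘ₗ L = T := by
  ext x
  have hx : G (L x) - x ∈ ker L := by
    rw [sub_mem_ker_iff, ← comp_apply (f := L), ← comp_apply (f := L ∘ₗ G), comp_assoc, hLGL]
  exact sub_mem_ker_iff.mp (hker hx)

theorem range_comp_comp_eq_inf_range {A B G : M →ₗ[R] M} (hA : A ∘ₗ G ∘ₗ (A + B) = A)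
    (hB : (A + B) ∘ₗ G ∘ₗ B = B) : range (A ∘ₗ G ∘ₗ B) = range A ⊓ range B := by
  apply le_antisymm
  · rintro _ ⟨x, rfl⟩
    refine ⟨mem_range_self _ _, x - G (B x), ?_⟩
    have hBx := congr($hB x)
    simp only [comp_apply, add_apply] at hBx ⊢
    rw [map_sub]
    exact sub_eq_of_eq_add hBx.symm
  · rintro y ⟨⟨u, rfl⟩, ⟨v, hv⟩⟩
    refine ⟨u + v, ?_⟩
    have hAu := congr($hA u)
    simp only [comp_apply, add_apply, map_add] at hAu ⊢
    rw [hv, add_comm, hAu]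

end Module

variable {𝕜 E : Type*} [RCLike 𝕜] [NormedAddCommGroup E] [InnerProductSpace 𝕜 E]

theorem IsPositive.apply_eq_zero_of_re_inner_eq_zero {T : E →ₗ[𝕜] E} (hT : T.IsPositive)
    {x : E} (hx : re ⟪T x, x⟫_𝕜 = 0) : T x = 0 := by
  -- The quadratic `t ↦ re ⟪T (x + t • T x), x + t • T x⟫` is nonnegative, so its discriminant
  -- `4 ‖T x‖ ^ 4` is nonpositive.
  have hquad : ∀ t : ℝ, 0 ≤ re ⟪T (T x), T x⟫_𝕜 * (t * t) + 2 * ‖T x‖ ^ 2 * t + 0 := by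
    intro t
    have h := hT.re_inner_nonneg_left (x + (t : 𝕜) • T x)
    have hsym : ⟪T (T x), x⟫_𝕜 = ⟪T x, T x⟫_𝕜 := hT.isSymmetric (T x) x
    simp only [map_add, map_smul, inner_add_left, inner_add_right, inner_smul_left,
      inner_smul_right, hsym, inner_self_eq_norm_sq_to_K, conj_ofReal] at h
    simp only [← ofReal_pow, map_add, re_ofReal_mul, ofReal_re, hx] at h
    linarith
  have hdisc := discrim_le_zero hquad
  rw [discrim, mul_zero, sub_zero] at hdisc
  have : ‖T x‖ ^ 2 = 0 := by nlinarith [sq_nonneg (‖T x‖ ^ 2)]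
  simpa using this

theorem IsPositive.ker_add_le_ker_right {T S : E →ₗ[𝕜] E} (hT : T.IsPositive)
    (hS : S.IsPositive) : ker (T + S) ≤ ker S :=
  add_comm T S ▸ hS.ker_add_le_ker_left hT

/-- `L ∘ G` is the orthogonal projection onto `range L`, whose orthogonal complement is `ker L`. -/
theorem IsSymmetric.sub_comp_apply_mem_ker {L G : E →ₗ[𝕜] E} (hL : L.IsSymmetric)
    (hLGL : L ∘ₗ G ∘ₗ L = L) (hLG : (L ∘ₗ G).IsSymmetric) (x : E) :
    x - (L ∘ₗ G) x ∈ ker L := by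
  rw [mem_ker]
  refine ext_inner_right 𝕜 fun v => ?_
  rw [hL, inner_sub_left, hLG, ← comp_apply (f := L ∘ₗ G), comp_assoc, hLGL, sub_self,
    inner_zero_left]

theorem IsSymmetric.comp_comp_eq_of_ker_le {L G T : E →ₗ[𝕜] E} (hT : T.IsSymmetric)
    (hL : L.IsSymmetric) (hLGL : L ∘ₗ G ∘ₗ L = L) (hLG : (L ∘ₗ G).IsSymmetric)
    (hker : ker L ≤ ker T) : L ∘ₗ G ∘ₗ T = T := by
  have hTLG : ∀ y, T ((L ∘ₗ G) y) = T y := fun y =>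
    (sub_mem_ker_iff.mp (hker (hL.sub_comp_apply_mem_ker hLGL hLG y))).symm
  ext x
  refine ext_inner_right 𝕜 fun y => ?_
  rw [← comp_assoc, comp_apply, hLG, hT, hTLG, ← hT]

end LinearMap

theorem parallelSum_range_general {V : Type*} [NormedAddCommGroup V] [InnerProductSpace ℝ V]
    (A B : V →ₗ[ℝ] V)
    (hA : A.IsSymmetric) (hB : B.IsSymmetric)
    (hApsd : ∀ x : V, 0 ≤ (inner ℝ x (A x) : ℝ)) (hBpsd : ∀ x : V, 0 ≤ (inner ℝ x (B x) : ℝ))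
    (G : V →ₗ[ℝ] V) (hG : IsMoorePenrose (A + B) G) :
    LinearMap.range (A ∘ₗ (G ∘ₗ B)) = LinearMap.range A ⊓ LinearMap.range B := by
  obtain ⟨hSGS, -, hSG, -⟩ := hG
  have hApos : A.IsPositive := ⟨hA, fun x => by simpa [real_inner_comm] using hApsd x⟩
  have hBpos : B.IsPositive := ⟨hB, fun x => by simpa [real_inner_comm] using hBpsd x⟩
  exact LinearMap.range_comp_comp_eq_inf_range
    (LinearMap.comp_comp_eq_of_ker_le hSGS (hApos.ker_add_le_ker_left hBpos))
    (hB.comp_comp_eq_of_ker_le (hA.add hB) hSGS hSG (hApos.ker_add_le_ker_right hBpos))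

theorem parallelSum_range {V : Type*} [NormedAddCommGroup V] [InnerProductSpace ℝ V]
    [FiniteDimensional ℝ V] (A B : V →ₗ[ℝ] V)
    (hA : A.IsSymmetric) (hB : B.IsSymmetric)
    (hApsd : ∀ x : V, 0 ≤ (inner ℝ x (A x) : ℝ)) (hBpsd : ∀ x : V, 0 ≤ (inner ℝ x (B x) : ℝ))
    (G : V →ₗ[ℝ] V) (hG : IsMoorePenrose (A + B) G) :
    LinearMap.range (A ∘ₗ (G ∘ₗ B)) = LinearMap.range A ⊓ LinearMap.range B :=
  parallelSum_range_general A B hA hB hApsd hBpsd G hG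
end
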